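/- Let c > 0, K > 0, τ* ∈ ℝ, σ* ∈ ℝ, and let g : ℝ → ℝ be twice continuously differentiable with |g'(y)| ≤ K and |g''(y)| ≤ K for all y, and g'(y) = 0 for y ∉ [σ*, σ*+1]. For τ < τ* and σ ∈ ℝ define u(τ, σ) = ∫_ℝ g(y) · (4πc(τ*−τ))^{−1/2} · exp( −(y − σ − c(τ*−τ))² / (4c(τ*−τ)) ) dy. Then there exists a constant C depending only on c and K such that for all τ < τ* and all σ ∈ ℝ: |∂²_σ u(τ, σ)| ≤ C / (1 + τ* − τ). -/

import Mathlib

open Real MeasureTheory ProbabilityTheory Set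
open scoped NNReal

/-!
With `a = c (τ* - τ)`, `u(τ, ·)` is `σ ↦ E[g(X + σ)]` for `X ~ N(a, 2a)`. Differentiating twice
under the expectation gives `∂²_σ u = E[g''(X + σ)]`, hence `|∂²_σ u| ≤ K`. Differentiating once
under the expectation and once through the Gaussian density `p` instead gives
`∂²_σ u = -∫ g'(y) p'(y - σ) dy`; since `|p'| ≤ 1 / (2a)` and `g'` lives on an interval of length
one, `|∂²_σ u| ≤ K / (2a)`. The smaller of the two bounds decays like `1 / (1 + τ* - τ)`.
-/

section TranslatedIntegral

variable {μ : Measure ℝ} [IsFiniteMeasure μ] {f : ℝ → ℝ} {K : ℝ}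

lemma integrable_of_abs_deriv_le (hμ : Integrable id μ) (hf : Differentiable ℝ f)
    (hf' : ∀ x, |deriv f x| ≤ K) : Integrable f μ := by
  refine ((integrable_const |f 0|).add (hμ.abs.const_mul K)).mono'
    hf.continuous.aestronglyMeasurable (ae_of_all _ fun x => ?_)
  have hmvt := convex_univ.norm_image_sub_le_of_norm_deriv_le (fun y _ => hf y)
    (fun y _ => hf' y) (mem_univ 0) (mem_univ x)
  simp only [Real.norm_eq_abs, sub_zero, Pi.add_apply, id] at hmvt ⊢
  linarith [abs_sub_abs_le_abs_sub (f x) (f 0)]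

lemma hasDerivAt_integral_comp_add (hμ : Integrable id μ) (hf : Differentiable ℝ f)
    (hf' : ∀ x, |deriv f x| ≤ K) (σ : ℝ) :
    HasDerivAt (fun s => ∫ x, f (x + s) ∂μ) (∫ x, deriv f (x + σ) ∂μ) σ := by
  have hshift : Integrable (fun x => f (x + σ)) μ :=
    integrable_of_abs_deriv_le hμ (hf.comp (differentiable_id.add_const σ))
      fun x => by rw [deriv_comp_add_const]; exact hf' _
  refine (hasDerivAt_integral_of_dominated_loc_of_deriv_le (bound := fun _ => K) Filter.univ_mem
    (Filter.Eventually.of_forall fun s =>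
      (hf.continuous.comp (continuous_add_const s)).aestronglyMeasurable)
    hshift ((measurable_deriv f).comp (measurable_add_const σ)).aestronglyMeasurable
    (ae_of_all _ fun x s _ => hf' (x + s)) (integrable_const K)
    (ae_of_all _ fun x s _ => (hf (x + s)).hasDerivAt.comp_const_add x s)).2

lemma deriv_integral_comp_add (hμ : Integrable id μ) (hf : Differentiable ℝ f)
    (hf' : ∀ x, |deriv f x| ≤ K) :
    deriv (fun s => ∫ x, f (x + s) ∂μ) = fun σ => ∫ x, deriv f (x + σ) ∂μ :=
  funext fun σ => (hasDerivAt_integral_comp_add hμ hf hf' σ).deriv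

lemma abs_deriv_deriv_integral_comp_add_le [IsProbabilityMeasure μ] {L : ℝ}
    (hμ : Integrable id μ) (hf : ContDiff ℝ 2 f) (hf1 : ∀ x, |deriv f x| ≤ L)
    (hf2 : ∀ x, |deriv (deriv f) x| ≤ K) (σ : ℝ) :
    |deriv (deriv fun s => ∫ x, f (x + s) ∂μ) σ| ≤ K := by
  have hf' : Differentiable ℝ (deriv f) :=
    (contDiff_succ_iff_deriv.mp hf).2.2.differentiable one_ne_zero
  rw [deriv_integral_comp_add hμ (hf.differentiable two_ne_zero) hf1,
    deriv_integral_comp_add hμ hf' hf2]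
  simpa using norm_integral_le_of_norm_le_const (μ := μ)
    (ae_of_all _ fun x => (Real.norm_eq_abs _).trans_le (hf2 (x + σ)))

end TranslatedIntegral

lemma hasDerivAt_integral_mul_comp_sub {h p : ℝ → ℝ} {B M : ℝ} (hh : Integrable h)
    (hp : Differentiable ℝ p) (hpB : ∀ x, |p x| ≤ B) (hp' : ∀ x, |deriv p x| ≤ M) (σ : ℝ) :
    HasDerivAt (fun s => ∫ y, h y * p (y - s)) (∫ y, h y * -deriv p (y - σ)) σ := by
  have hmeas : ∀ s, AEStronglyMeasurable (fun y => p (y - s)) :=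
    fun s => (hp.continuous.comp (continuous_sub_right s)).aestronglyMeasurable
  refine (hasDerivAt_integral_of_dominated_loc_of_deriv_le (bound := fun y => M * |h y|)
    (F' := fun s y => h y * -deriv p (y - s))
    Filter.univ_mem
    (Filter.Eventually.of_forall fun s => hh.aestronglyMeasurable.mul (hmeas s))
    (hh.mul_bdd (hmeas σ) (ae_of_all _ fun y => hpB _))
    (hh.aestronglyMeasurable.mul
      ((measurable_deriv p).comp (measurable_sub_const σ)).aestronglyMeasurable.neg)
    (ae_of_all _ fun y s _ => ?_) (hh.abs.const_mul M)
    (ae_of_all _ fun y s _ => ?_)).2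
  · rw [Real.norm_eq_abs, abs_mul, abs_neg, mul_comm]
    exact mul_le_mul_of_nonneg_right (hp' _) (abs_nonneg _)
  · have hsub : HasDerivAt (fun s => y - s) (-1) s := by
      simpa using (hasDerivAt_id s).const_sub y
    simpa using ((hp (y - s)).hasDerivAt.comp s hsub).const_mul (h y)

namespace ProbabilityTheory

lemma hasDerivAt_gaussianPDFReal (m : ℝ) (v : ℝ≥0) (x : ℝ) :
    HasDerivAt (gaussianPDFReal m v) (-((x - m) / v) * gaussianPDFReal m v x) x := by
  have hexponent : HasDerivAt (fun y => -(y - m) ^ 2 / (2 * v)) (-((x - m) / v)) x :=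
    ((((hasDerivAt_id' x).sub_const m).fun_pow 2).fun_neg.div_const _).congr_deriv (by ring)
  exact (hexponent.exp.const_mul (√(2 * π * v))⁻¹).congr_deriv
    (by simp only [gaussianPDFReal]; ring)

lemma gaussianPDFReal_le (m : ℝ) (v : ℝ≥0) (x : ℝ) :
    gaussianPDFReal m v x ≤ (√(2 * π * v))⁻¹ :=
  mul_le_of_le_one_right (by positivity) (exp_le_one_iff.2
    (div_nonpos_of_nonpos_of_nonneg (neg_nonpos.2 (sq_nonneg _)) (by positivity)))

lemma abs_deriv_gaussianPDFReal_le (m : ℝ) (v : ℝ≥0) (x : ℝ) :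
    |deriv (gaussianPDFReal m v) x| ≤ 1 / v := by
  rcases eq_or_ne v 0 with rfl | hv
  · simp
  have hε : (0 : ℝ) < 1 / (2 * v) := by positivity
  have hderiv : deriv (gaussianPDFReal m v) x
      = -(1 / v) * (√(2 * π * v))⁻¹ * mulExpNegMulSq (1 / (2 * v)) (x - m) := by
    rw [(hasDerivAt_gaussianPDFReal m v x).deriv, gaussianPDFReal, mulExpNegSq_apply]
    field_simp
  -- `|y| e^{-y²/(2v)} ≤ √(2v) ≤ √(2πv)`
  have hsqrt : (√(2 * π * v))⁻¹ * (√(1 / (2 * v)))⁻¹ ≤ 1 := by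
    rw [one_div, Real.sqrt_inv, inv_inv, inv_mul_le_one₀ (by positivity)]
    exact Real.sqrt_le_sqrt (by nlinarith [Real.pi_gt_three])
  rw [hderiv, abs_mul, abs_mul, abs_neg, abs_of_pos (by positivity : (0 : ℝ) < 1 / v),
    abs_of_pos (by positivity : (0 : ℝ) < (√(2 * π * v))⁻¹)]
  calc 1 / (v : ℝ) * (√(2 * π * v))⁻¹ * |mulExpNegMulSq (1 / (2 * v)) (x - m)|
      ≤ 1 / v * (√(2 * π * v))⁻¹ * (√(1 / (2 * v)))⁻¹ := by
        gcongr; exact abs_mulExpNegMulSq_le hε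
    _ ≤ 1 / v := by
        rw [mul_assoc]; exact mul_le_of_le_one_right (by positivity) hsqrt

lemma integral_comp_add_gaussianReal {v : ℝ≥0} (hv : v ≠ 0) (f : ℝ → ℝ) (m σ : ℝ) :
    ∫ x, f (x + σ) ∂gaussianReal m v = ∫ y, f y * gaussianPDFReal m v (y - σ) := by
  rw [integral_gaussianReal_eq_integral_smul hv,
    ← integral_sub_right_eq_self (fun x => gaussianPDFReal m v x • f (x + σ)) σ]
  simp only [sub_add_cancel, smul_eq_mul, mul_comm]

lemma heatKernel_eq_gaussianPDFReal {a : ℝ} (ha : 0 ≤ a) (m x : ℝ) :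
    (4 * π * a) ^ (-(1 : ℝ) / 2) * exp (-(x - m) ^ 2 / (4 * a))
      = gaussianPDFReal m (2 * a).toNNReal x := by
  rw [gaussianPDFReal, Real.coe_toNNReal _ (by positivity), neg_div, Real.rpow_neg (by positivity),
    ← Real.sqrt_eq_rpow]
  ring_nf

end ProbabilityTheory

lemma abs_deriv_deriv_integral_comp_add_gaussianReal_le {f : ℝ → ℝ} {K : ℝ} {S : Set ℝ}
    (hf : ContDiff ℝ 1 f) (hf1 : ∀ x, |deriv f x| ≤ K) (hS : IsCompact S)
    (hsupp : ∀ x ∉ S, deriv f x = 0) (m : ℝ) {v : ℝ≥0} (hv : v ≠ 0) (σ : ℝ) :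
    |deriv (deriv fun s => ∫ x, f (x + s) ∂gaussianReal m v) σ| ≤ K * volume.real S / v := by
  have hμ : Integrable id (gaussianReal m v) := (memLp_id_gaussianReal 1).integrable le_rfl
  have hp : Differentiable ℝ (gaussianPDFReal m v) :=
    fun x => (hasDerivAt_gaussianPDFReal m v x).differentiableAt
  have hf'int : Integrable (deriv f) :=
    (hf.continuous_deriv le_rfl).integrable_of_hasCompactSupport (.intro hS hsupp)
  have hderiv : deriv (fun s => ∫ x, f (x + s) ∂gaussianReal m v)
      = fun s => ∫ y, deriv f y * gaussianPDFReal m v (y - s) := by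
    rw [deriv_integral_comp_add hμ (hf.differentiable one_ne_zero) hf1]
    exact funext fun s => integral_comp_add_gaussianReal hv _ m s
  rw [hderiv, (hasDerivAt_integral_mul_comp_sub hf'int hp
    (fun x => (abs_of_nonneg (gaussianPDFReal_nonneg m v x)).trans_le (gaussianPDFReal_le m v x))
    (abs_deriv_gaussianPDFReal_le m v) σ).deriv,
    ← setIntegral_eq_integral_of_forall_compl_eq_zero (s := S)
      (f := fun y => deriv f y * -deriv (gaussianPDFReal m v) (y - σ))
      fun y hy => by simp [hsupp y hy]]
  have hbound : ∀ y, ‖deriv f y * -deriv (gaussianPDFReal m v) (y - σ)‖ ≤ K * (1 / v) :=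
    fun y => by
      rw [Real.norm_eq_abs, abs_mul, abs_neg]
      exact mul_le_mul (hf1 y) (abs_deriv_gaussianPDFReal_le m v _) (abs_nonneg _)
        ((abs_nonneg _).trans (hf1 y))
  calc _ ≤ K * (1 / v) * volume.real S :=
        norm_setIntegral_le_of_norm_le_const hS.measure_lt_top fun y _ => hbound y
    _ = K * volume.real S / v := by ring

lemma min_le_two_mul_add_div_one_add {A B t : ℝ} (hA : 0 ≤ A) (hB : 0 ≤ B) (ht : 0 < t) :
    min A (B / t) ≤ 2 * (A + B) / (1 + t) := by
  rw [le_div_iff₀ (by positivity)]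
  rcases le_total t 1 with h | h
  · nlinarith [min_le_left A (B / t)]
  · have hBt : B / t * (1 + t) ≤ 2 * B := by
      rw [div_mul_eq_mul_div, div_le_iff₀ ht]; nlinarith
    nlinarith [min_le_right A (B / t)]

theorem second_derivative_decay_of_heat_semigroup
    (c K : ℝ) (hc : 0 < c) (hK : 0 < K) :
    ∃ C : ℝ, ∀ (τs σs : ℝ) (g : ℝ → ℝ), ContDiff ℝ 2 g →
      (∀ y, |deriv g y| ≤ K) →
      (∀ y, |deriv (deriv g) y| ≤ K) →
      (∀ y, y ∉ Set.Icc σs (σs + 1) → deriv g y = 0) →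
      ∀ (u : ℝ → ℝ → ℝ),
        (∀ (τ σ : ℝ), τ < τs →
          u τ σ = ∫ y : ℝ, g y * (4 * π * c * (τs - τ)) ^ (-(1 : ℝ) / 2)
            * Real.exp (-(y - σ - c * (τs - τ)) ^ 2 / (4 * c * (τs - τ)))) →
        ∀ (τ σ : ℝ), τ < τs →
          |deriv (deriv (fun s => u τ s)) σ| ≤ C / (1 + τs - τ) := by
  refine ⟨2 * (K + K / (2 * c)), fun τs σs g hg hg1 hg2 hsupp u hu τ σ hτ => ?_⟩
  have ht : 0 < τs - τ := sub_pos.2 hτ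
  set v := (2 * (c * (τs - τ))).toNNReal
  have hv : (v : ℝ) = 2 * c * (τs - τ) := by rw [Real.coe_toNNReal _ (by positivity)]; ring
  have hu' : (fun s => u τ s) = fun s => ∫ x, g (x + s) ∂gaussianReal (c * (τs - τ)) v := by
    refine funext fun s => ?_
    rw [hu τ s hτ, integral_comp_add_gaussianReal (by positivity)]
    refine integral_congr_ae (ae_of_all _ fun y => ?_)
    dsimp only
    rw [← heatKernel_eq_gaussianPDFReal (by positivity)]
    ring_nf
  calc |deriv (deriv (fun s => u τ s)) σ|
      ≤ min K (K * volume.real (Icc σs (σs + 1)) / v) := by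
        rw [hu']
        exact le_min (abs_deriv_deriv_integral_comp_add_le
            ((memLp_id_gaussianReal 1).integrable le_rfl) hg hg1 hg2 σ)
          (abs_deriv_deriv_integral_comp_add_gaussianReal_le hg.of_succ hg1 isCompact_Icc hsupp _
            (by positivity) σ)
    _ = min K (K / (2 * c) / (τs - τ)) := by
        rw [hv, Real.volume_real_Icc_of_le (by linarith)]; field_simp; ring_nf
    _ ≤ 2 * (K + K / (2 * c)) / (1 + τs - τ) := by
        rw [add_sub_assoc]; exact min_le_two_mul_add_div_one_add hK.le (by positivity) ht
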